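/- arXiv:2003.02929 — 2 statements merged into one kernel-verified Lean document; each statement's English description precedes it below -/
import Mathlib

section
/- For any d >= 1, the number of depth-d features q_d satisfies q_d >= q^l_d, where q^l_d is defined by the projection/modification-only recursion with the same m and G. In particular, the total number of features up to depth d grows at least super-exponentially in d. -/
open Finset

/-- The total number of depth-`d` features `q d` dominates the
projection/modification-only count `ql d`, and the cumulative number of
features up to depth `d` grows at least super-exponentially. -/
theorem bgnlm_q_ge_ql (m G : ℕ) (hm : 1 ≤ m) (hG : 1 ≤ G)
    (q qp qs ql : ℕ → ℕ)
    (h0 : q 0 = m) (hp0 : qp 0 = 0) (hs0 : qs 0 = 0)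
    (hq : ∀ d, 1 ≤ d → q d = qp d + qs d)
    (hp : ∀ d, 1 ≤ d →
      qp d = G * (2 ^ (∑ t ∈ range d, q t) - 1) - ∑ t ∈ Ico 1 (d - 1), q t
              - qp (d - 1))
    (hsodd : ∀ d, 1 ≤ d → d % 2 = 1 →
      qs d = (∑ t ∈ range ((d - 1) / 2), q t * q (d - t - 1))
              + Nat.choose (1 + q ((d - 1) / 2)) 2)
    (hseven : ∀ d, 1 ≤ d → d % 2 = 0 →
      qs d = ∑ t ∈ range ((d - 2) / 2 + 1), q t * q (d - t - 1))
    (hl0 : ql 0 = m)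
    (hl : ∀ d, 1 ≤ d →
      ql d = G * (2 ^ (∑ t ∈ range d, ql t) - 1) - ∑ t ∈ Ico 1 d, ql t) :
    (∀ d, 1 ≤ d → ql d ≤ q d) ∧
    (∀ c : ℝ, 1 < c → ∃ D : ℕ, ∀ d ≥ D,
      (c : ℝ) ^ d < ((∑ t ∈ range (d + 1), q t : ℕ) : ℝ)) := by
  -- Part 1: ql d ≤ q d for all d
  have main : ∀ d, ql d ≤ q d := by
    intro d
    induction d using Nat.strong_induction_on with
    | _ d IH =>
      rcases Nat.eq_zero_or_pos d with rfl | hd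
      · rw [h0, hl0]
      · have hSl : ∑ t ∈ range d, ql t ≤ ∑ t ∈ range d, q t :=
          Finset.sum_le_sum fun t ht => IH t (mem_range.mp ht)
        set S := ∑ t ∈ range d, q t with hS
        set Sl := ∑ t ∈ range d, ql t with hSl'
        have hsplit : S = q 0 + ∑ t ∈ Ico 1 d, q t := by
          rw [hS, range_eq_Ico, Finset.sum_eq_sum_Ico_succ_bot hd]
        have hsplitl : Sl = ql 0 + ∑ t ∈ Ico 1 d, ql t := by
          rw [hSl', range_eq_Ico, Finset.sum_eq_sum_Ico_succ_bot hd]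
        have hBl : ∑ t ∈ Ico 1 d, ql t ≤ ∑ t ∈ Ico 1 d, q t :=
          Finset.sum_le_sum fun t ht => IH t (mem_Ico.mp ht).2
        have hA : ∑ t ∈ Ico 1 (d - 1), q t + qp (d - 1) ≤ ∑ t ∈ Ico 1 d, q t := by
          rcases Nat.lt_or_ge d 2 with h2 | h2
          · interval_cases d
            simp [hp0]
          · have hd1 : 1 ≤ d - 1 := by omega
            have hqp1 : qp (d - 1) ≤ q (d - 1) := by
              rw [hq (d - 1) hd1]; omega
            have hsum := Finset.sum_Ico_succ_top (a := 1) (b := d - 1) hd1 q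
            rw [show d - 1 + 1 = d by omega] at hsum
            omega
        -- power fact
        have hpow : 2 ^ Sl + (S - Sl) ≤ 2 ^ S := by
          have h1 : S - Sl < 2 ^ (S - Sl) := Nat.lt_two_pow_self (n := _)
          have h2 : 2 ^ Sl * 2 ^ (S - Sl) = 2 ^ S := by
            rw [← pow_add]; congr 1; omega
          have h3 : 1 ≤ 2 ^ Sl := Nat.one_le_two_pow
          calc 2 ^ Sl + (S - Sl)
              ≤ 2 ^ Sl + 2 ^ Sl * (S - Sl) := by
                have := Nat.le_mul_of_pos_left (S - Sl) (show 0 < 2 ^ Sl by omega)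
                omega
            _ = 2 ^ Sl * (S - Sl + 1) := by ring
            _ ≤ 2 ^ Sl * 2 ^ (S - Sl) := Nat.mul_le_mul_left _ (by omega)
            _ = 2 ^ S := h2
        obtain ⟨X, hX⟩ : ∃ X, X = G * (2 ^ Sl - 1) := ⟨_, rfl⟩
        obtain ⟨Y, hY⟩ : ∃ Y, Y = G * (2 ^ S - 1) := ⟨_, rfl⟩
        have hXY : X + (S - Sl) ≤ Y := by
          have h3 : 1 ≤ 2 ^ Sl := Nat.one_le_two_pow
          have hab : (2 ^ Sl - 1) + (S - Sl) ≤ 2 ^ S - 1 := by omega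
          calc X + (S - Sl) = G * (2 ^ Sl - 1) + (S - Sl) := by rw [hX]
            _ ≤ G * (2 ^ Sl - 1) + G * (S - Sl) := by
                have := Nat.le_mul_of_pos_left (S - Sl) (show 0 < G by omega)
                omega
            _ = G * ((2 ^ Sl - 1) + (S - Sl)) := by ring
            _ ≤ G * (2 ^ S - 1) := Nat.mul_le_mul_left _ hab
            _ = Y := hY.symm
        have hqpd : qp d = Y - (∑ t ∈ Ico 1 (d - 1), q t + qp (d - 1)) := by
          rw [hp d hd, hY, Nat.sub_sub]
        have hqld : ql d = X - ∑ t ∈ Ico 1 d, ql t := by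
          rw [hl d hd, hX]
        have hq0 : q 0 = ql 0 := by rw [h0, hl0]
        have hqd : qp d ≤ q d := by rw [hq d hd]; omega
        omega
  -- growth of cumulative ql sums
  have hstep : ∀ d, 1 ≤ d → 2 ^ (∑ t ∈ range d, ql t) ≤ ∑ t ∈ range (d + 1), ql t := by
    intro d hd
    have hsucc : ∑ t ∈ range (d + 1), ql t = ∑ t ∈ range d, ql t + ql d :=
      Finset.sum_range_succ ql d
    set S := ∑ t ∈ range d, ql t with hS
    have hsplit : S = ql 0 + ∑ t ∈ Ico 1 d, ql t := by
      rw [hS, range_eq_Ico, Finset.sum_eq_sum_Ico_succ_bot hd]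
    have hlt : S < 2 ^ S := Nat.lt_two_pow_self (n := S)
    have hge : 2 ^ S - 1 ≤ G * (2 ^ S - 1) :=
      Nat.le_mul_of_pos_left _ (show 0 < G by omega)
    have hqld := hl d hd
    rw [← hS] at hqld
    omega
  have hlow : ∀ d, 1 ≤ d → 2 ^ (d - 1) ≤ ∑ t ∈ range d, ql t := by
    intro d hd
    induction d with
    | zero => omega
    | succ n IHn =>
      rcases Nat.eq_zero_or_pos n with rfl | hn
      · simpa [hl0] using hm
      · have h1 := hstep n hn
        have h2 := IHn hn
        have h4 : n ≤ 2 ^ (n - 1) := by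
          have := Nat.lt_two_pow_self (n := n - 1); omega
        calc 2 ^ (n + 1 - 1) = 2 ^ n := by norm_num
          _ ≤ 2 ^ (2 ^ (n - 1)) := Nat.pow_le_pow_right (by norm_num) h4
          _ ≤ 2 ^ (∑ t ∈ range n, ql t) := Nat.pow_le_pow_right (by norm_num) h2
          _ ≤ ∑ t ∈ range (n + 1), ql t := h1
  have f3 : ∀ d, 1 ≤ d → 2 ^ (2 ^ (d - 1)) ≤ ∑ t ∈ range (d + 1), ql t := by
    intro d hd
    calc 2 ^ (2 ^ (d - 1)) ≤ 2 ^ (∑ t ∈ range d, ql t) :=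
          Nat.pow_le_pow_right (by norm_num) (hlow d hd)
      _ ≤ ∑ t ∈ range (d + 1), ql t := hstep d hd
  have hQ : ∀ d : ℕ, ∑ t ∈ range (d + 1), ql t ≤ ∑ t ∈ range (d + 1), q t :=
    fun d => Finset.sum_le_sum fun t _ => main t
  have hkd : ∀ k d : ℕ, k * k + k + 1 ≤ d → k * d ≤ 2 ^ (d - 1) := by
    intro k d hdk
    have hk1 : k + 1 ≤ 2 ^ k := Nat.lt_two_pow_self (n := k)
    have hdk2 : d - k ≤ 2 ^ (d - 1 - k) := by
      have := Nat.lt_two_pow_self (n := d - 1 - k); omega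
    have hsplit : 2 ^ (d - 1) = 2 ^ k * 2 ^ (d - 1 - k) := by
      rw [← pow_add]; congr 1; omega
    have hmul : (k + 1) * (d - k) ≤ 2 ^ k * 2 ^ (d - 1 - k) :=
      Nat.mul_le_mul hk1 hdk2
    have hlast : k * d ≤ (k + 1) * (d - k) := by
      obtain ⟨e, rfl⟩ : ∃ e, d = (k * k + k + 1) + e := ⟨d - (k * k + k + 1), by omega⟩
      have hsub : k * k + k + 1 + e - k = k * k + 1 + e := by omega
      rw [hsub]
      nlinarith
    omega
  refine ⟨fun d _ => main d, ?_⟩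
  intro c hc
  set k := ⌈c⌉₊ with hk
  have hck : c < (2 : ℝ) ^ k := by
    have h1 : c ≤ (k : ℝ) := Nat.le_ceil c
    have h2 : (k : ℝ) < (2 : ℝ) ^ k := by exact_mod_cast Nat.lt_two_pow_self (n := k)
    linarith
  refine ⟨k * k + k + 2, fun d hd => ?_⟩
  have hd1 : 1 ≤ d := by omega
  have hnat : 2 ^ (k * d) ≤ ∑ t ∈ range (d + 1), q t := by
    have h1 : k * d ≤ 2 ^ (d - 1) := hkd k d (by omega)
    have h2 : 2 ^ (k * d) ≤ 2 ^ (2 ^ (d - 1)) := Nat.pow_le_pow_right (by norm_num) h1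
    exact le_trans h2 (le_trans (f3 d hd1) (hQ d))
  have hc0 : (0 : ℝ) ≤ c := by linarith
  calc (c : ℝ) ^ d < ((2 : ℝ) ^ k) ^ d := by
        exact pow_lt_pow_left₀ hck hc0 (by omega)
    _ = (2 : ℝ) ^ (k * d) := by rw [← pow_mul]
    _ ≤ ((∑ t ∈ range (d + 1), q t : ℕ) : ℝ) := by exact_mod_cast hnat
end

section
/- In the Metropolis-Hastings step of MJMCMC with acceptance probability r(m, m*) = min{1, [pi(m*) q_r(m | m_(1))] / [pi(m) q_r(m* | m*_(1))]}, if the forward and backward auxiliary proposal mechanisms are symmetric in the sense that the joint proposal density of (m*_(1), m*) given m equals that of (m_(1), m) given m*, then the resulting transition kernel satisfies detailed balance with respect to pi, and hence pi is a stationary distribution of the chain. -/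
open Finset

lemma mjmcmc_min_key (a b : ℝ) (ha : 0 ≤ a) (hb : 0 ≤ b) :
    a * min 1 (b / a) = min a b := by
  rcases ha.eq_or_lt with h | h
  · simp [← h, min_eq_left hb]
  · rw [mul_min_of_nonneg _ _ h.le, mul_one, mul_div_cancel₀ _ h.ne']

/-- Detailed balance for the Metropolis–Hastings step of MJMCMC: with
acceptance probability
`r = min{1, π(m*) q_r(m|m₍₁₎) / (π(m) q_r(m*|m*₍₁₎))}`, if the forward and
backward auxiliary proposal mechanisms are symmetric (the joint density of
`(m*₍₁₎, m*)` given `m` equals that of `(m₍₁₎, m)` given `m*`), then the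
transition kernel is reversible with respect to `π`, and `π` is stationary. -/
theorem mjmcmc_detailed_balance
    {M : Type*} [Fintype M] [DecidableEq M]
    (π : M → ℝ) (hπ : ∀ m, 0 < π m) (hπ1 : ∑ m, π m = 1)
    (qa qr : M → M → ℝ)         -- large jump + optimization; randomization
    (hqa_nonneg : ∀ m u, 0 ≤ qa m u) (hqr_nonneg : ∀ u m, 0 ≤ qr u m)
    (hqa_sum : ∀ m, ∑ u, qa m u = 1) (hqr_sum : ∀ u, ∑ m, qr u m = 1)
    (hsym : ∀ m mstar u, qa m u * qr u mstar = qa mstar u * qr u m)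
    (A : M → M → ℝ)
    (hA : ∀ m mstar, A m mstar =
      ∑ u, ∑ v, qa m u * qr u mstar * qa mstar v *
        min 1 (π mstar * qr v m / (π m * qr u mstar)))
    (K : M → M → ℝ)
    (hK : ∀ m m', K m m' =
      if m' = m then A m m + (1 - ∑ m'', A m m'') else A m m') :
    (∀ m m', π m * K m m' = π m' * K m' m) ∧
    (∀ m', ∑ m, π m * K m m' = π m') := by
  -- Symmetry of π·A via term-by-term symmetrization of the double sum.
  have hAsym : ∀ m m', π m * A m m' = π m' * A m' m := by
    intro m m'
    rw [hA m m', hA m' m]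
    simp only [Finset.mul_sum]
    rw [Finset.sum_comm (s := Finset.univ) (t := Finset.univ)]
    refine Finset.sum_congr rfl (fun u _ => ?_)
    refine Finset.sum_congr rfl (fun v _ => ?_)
    have h1 : 0 ≤ π m * qr v m' := mul_nonneg (hπ m).le (hqr_nonneg v m')
    have h2 : 0 ≤ π m' * qr u m := mul_nonneg (hπ m').le (hqr_nonneg u m)
    have e1 : π m * (qa m v * qr v m' * qa m' u *
        min 1 (π m' * qr u m / (π m * qr v m')))
        = qa m v * qa m' u *
          (π m * qr v m' * min 1 (π m' * qr u m / (π m * qr v m'))) := by ring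
    have e2 : π m' * (qa m' u * qr u m * qa m v *
        min 1 (π m * qr v m' / (π m' * qr u m)))
        = qa m v * qa m' u *
          (π m' * qr u m * min 1 (π m * qr v m' / (π m' * qr u m))) := by ring
    rw [e1, e2, mjmcmc_min_key _ _ h1 h2, mjmcmc_min_key _ _ h2 h1, min_comm]
  have db : ∀ m m', π m * K m m' = π m' * K m' m := by
    intro m m'
    by_cases h : m' = m
    · subst h; rfl
    · rw [hK m m', hK m' m, if_neg h, if_neg (fun e => h e.symm)]
      exact hAsym m m'
  refine ⟨db, fun m' => ?_⟩
  have hrow : ∑ m, K m' m = 1 := by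
    have hpt : ∀ m, K m' m = A m' m + (if m = m' then 1 - ∑ x, A m' x else 0) := by
      intro m
      rw [hK m' m]
      by_cases h : m = m'
      · subst h; simp
      · simp [h]
    rw [Finset.sum_congr rfl (fun m _ => hpt m), Finset.sum_add_distrib,
      Finset.sum_ite_eq' Finset.univ m' (fun _ => 1 - ∑ x, A m' x)]
    simp
  calc ∑ m, π m * K m m' = ∑ m, π m' * K m' m :=
        Finset.sum_congr rfl (fun m _ => db m m')
    _ = π m' * ∑ m, K m' m := (Finset.mul_sum _ _ _).symm
    _ = π m' := by rw [hrow, mul_one]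
end
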